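/- arXiv:math/0702279 — 2 statements merged into one kernel-verified Lean document; each statement's English description precedes it below -/
import Mathlib

section
/- Let f : ℤ → ℕ ∪ {∞} be any function such that f⁻¹(0) is a finite set, and let φ : ℕ → ℝ be any nonnegative function such that φ(x) → ∞ as x → ∞. Then there exist uncountably many asymptotic bases A of the integers such that r_A(n) = f(n) for all integers n and A(-x, x) ≤ φ(x) for all x ≥ 0. -/
/-!
The sets are increasing unions of finite sets `A₀ ⊆ A₁ ⊆ ⋯`. At stage `k` one picks a target `n`
with `r_A(n) < f(n)` (the `k`-th term of a sequence visiting every integer infinitely often, if it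
is still deficient) and adds `x` and `n - x` for a negative `x` so large that `x + (n - x)` is the
only new representation of `n`, while every other new sum `m` has exactly one new representation,
none old, and lies outside the finite zero set of `f`. Hence `r_A ≤ f` is preserved at every stage,
and every value of `f` is eventually reached. Elements added late are large, which keeps the
counting function below `φ`; and `x` may be shifted by one at stage `k` according to whether
`k ∈ G`, so that different `G ⊆ ℕ` give different sets.
-/

/-- The representation function of a set `A` of integers:
`r_A(n) = card {(a,b) : a, b ∈ A, a ≤ b, a + b = n}`, valued in `ℕ∞`. -/
noncomputable def repFn (A : Set ℤ) (n : ℤ) : ℕ∞ :=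
  {p : ℤ × ℤ | p.1 ∈ A ∧ p.2 ∈ A ∧ p.1 ≤ p.2 ∧ p.1 + p.2 = n}.encard

/-- The counting function of a set `A` of integers:
`A(y, x) = card {a ∈ A : y ≤ a ≤ x}`. -/
noncomputable def countFn (A : Set ℤ) (y x : ℝ) : ℕ :=
  {a : ℤ | a ∈ A ∧ y ≤ (a : ℝ) ∧ (a : ℝ) ≤ x}.ncard

theorem Set.encard_iUnion_of_directed {α ι : Type*} [Nonempty ι] {S : ι → Set α}
    (hS : Directed (· ⊆ ·) S) : (⋃ k, S k).encard = ⨆ k, (S k).encard := by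
  refine le_antisymm (ENat.forall_natCast_le_iff_le.mp fun a ha => ?_)
    (iSup_le fun k => Set.encard_mono (Set.subset_iUnion S k))
  obtain ⟨t, hts, hta⟩ := Set.exists_subset_encard_eq ha
  have ht : t.Finite := Set.finite_of_encard_eq_coe hta
  obtain ⟨K, hK⟩ := hS.exists_mem_subset_of_finset_subset_biUnion
    (s := ht.toFinset) (by simpa using hts)
  calc (a : ℕ∞) = t.encard := hta.symm
    _ ≤ (S K).encard := Set.encard_mono (by simpa using hK)
    _ ≤ ⨆ k, (S k).encard := le_iSup (fun k => (S k).encard) K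

def repPairs (A : Set ℤ) (n : ℤ) : Set (ℤ × ℤ) :=
  {p | p.1 ∈ A ∧ p.2 ∈ A ∧ p.1 ≤ p.2 ∧ p.1 + p.2 = n}

theorem repFn_eq_encard (A : Set ℤ) (n : ℤ) : repFn A n = (repPairs A n).encard := rfl

theorem repPairs_mono {A A' : Set ℤ} (h : A ⊆ A') (n : ℤ) : repPairs A n ⊆ repPairs A' n :=
  fun _ ⟨h1, h2, hle⟩ => ⟨h h1, h h2, hle⟩

theorem repFn_mono {A A' : Set ℤ} (h : A ⊆ A') (n : ℤ) : repFn A n ≤ repFn A' n :=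
  Set.encard_mono (repPairs_mono h n)

theorem repFn_iUnion_of_directed {ι : Type*} [Nonempty ι] {A : ι → Set ℤ}
    (hA : Directed (· ⊆ ·) A) (n : ℤ) :
    repFn (⋃ k, A k) n = ⨆ k, repFn (A k) n := by
  have hpairs : repPairs (⋃ k, A k) n = ⋃ k, repPairs (A k) n := by
    refine Set.Subset.antisymm ?_
      (Set.iUnion_subset fun k => repPairs_mono (Set.subset_iUnion A k) n)
    rintro p ⟨h1, h2, hp⟩
    obtain ⟨i, hi⟩ := Set.mem_iUnion.mp h1
    obtain ⟨j, hj⟩ := Set.mem_iUnion.mp h2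
    obtain ⟨k, hik, hjk⟩ := hA i j
    exact Set.mem_iUnion.mpr ⟨k, hik hi, hjk hj, hp⟩
  rw [repFn_eq_encard, hpairs, Set.encard_iUnion_of_directed
    fun i j => (hA i j).imp fun _ hk => ⟨repPairs_mono hk.1 n, repPairs_mono hk.2 n⟩]
  rfl

theorem repFn_eq_zero_of_lt_natAbs {A : Set ℤ} {B : ℕ} (hB : ∀ a ∈ A, a.natAbs ≤ B) {n : ℤ}
    (hn : 2 * B < n.natAbs) : repFn A n = 0 := by
  rw [repFn_eq_encard, Set.encard_eq_zero, Set.eq_empty_iff_forall_notMem]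
  rintro p ⟨h1, h2, -, hp⟩
  have := hB _ h1
  have := hB _ h2
  omega

section Extension

variable {A : Set ℤ} {B Z : ℕ} {n x : ℤ}
  (hB : ∀ a ∈ A, a.natAbs ≤ B) (hx : 3 * (B : ℤ) + n.natAbs + Z < -x)
include hB hx

theorem repPairs_insert_insert_of_notMem {m : ℤ} {p : ℤ × ℤ}
    (hp : p ∈ repPairs (insert x (insert (n - x) A)) m) (hpA : p ∉ repPairs A m) :
    (m ≤ n → p.1 = x) ∧ (n ≤ m → p.2 = n - x) ∧ (m ≠ n → 2 * B + Z < m.natAbs) := by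
  obtain ⟨p1, p2⟩ := p
  obtain ⟨h1, h2, hle, hsum⟩ := hp
  simp only [Set.mem_insert_iff] at h1 h2
  by_cases hp1 : p1 ∈ A
  · have hp2 : p2 ∉ A := fun hp2 => hpA ⟨hp1, hp2, hle, hsum⟩
    have := hB _ hp1
    rcases h2 with rfl | rfl | h2
    · omega
    · omega
    · exact absurd h2 hp2
  · have h2' : p2 = x ∨ p2 = n - x ∨ p2.natAbs ≤ B := h2.imp_right (Or.imp_right (hB p2))
    rcases h1 with rfl | rfl | h1
    · omega
    · omega
    · exact absurd h1 hp1

theorem repPairs_insert_insert_self :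
    repPairs (insert x (insert (n - x) A)) n = insert (x, n - x) (repPairs A n) := by
  refine Set.Subset.antisymm (fun p hp => ?_) (Set.insert_subset ?_ (repPairs_mono
    ((Set.subset_insert _ _).trans (Set.subset_insert _ _)) n))
  · by_cases hpA : p ∈ repPairs A n
    · exact Or.inr hpA
    · have hp' := repPairs_insert_insert_of_notMem hB hx hp hpA
      exact Or.inl (Prod.ext (hp'.1 le_rfl) (hp'.2.1 le_rfl))
  · exact ⟨Set.mem_insert _ _, Set.mem_insert_of_mem _ (Set.mem_insert _ _), by omega, by ring⟩

theorem repFn_insert_insert_self : repFn (insert x (insert (n - x) A)) n = repFn A n + 1 := by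
  rw [repFn_eq_encard, repFn_eq_encard, repPairs_insert_insert_self hB hx,
    Set.encard_insert_of_notMem]
  rintro ⟨hxA, -⟩
  have := hB x hxA
  omega

theorem repFn_insert_insert_of_ne_of_natAbs_le {m : ℤ} (hm : m ≠ n) (hmZ : m.natAbs ≤ Z) :
    repFn (insert x (insert (n - x) A)) m = repFn A m := by
  refine congrArg Set.encard (Set.Subset.antisymm (fun p hp => ?_) (repPairs_mono
    ((Set.subset_insert _ _).trans (Set.subset_insert _ _)) m))
  by_contra hpA
  have := (repPairs_insert_insert_of_notMem hB hx hp hpA).2.2 hm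
  omega

theorem repFn_insert_insert_le_of_ne {m : ℤ} (hm : m ≠ n) :
    repFn (insert x (insert (n - x) A)) m ≤ max (repFn A m) 1 := by
  by_cases hold : repPairs (insert x (insert (n - x) A)) m ⊆ repPairs A m
  · exact le_max_of_le_left (Set.encard_mono hold)
  obtain ⟨p, hp, hpA⟩ := Set.not_subset.mp hold
  have hmB := (repPairs_insert_insert_of_notMem hB hx hp hpA).2.2 hm
  -- `m` is too large to be a sum of two old elements, and new pairs with sum `m` share an entry
  have hnew : ∀ q ∈ repPairs (insert x (insert (n - x) A)) m, q ∉ repPairs A m := by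
    rintro q - ⟨h1, h2, -, hq⟩
    have := hB _ h1
    have := hB _ h2
    omega
  refine le_max_of_le_right (Set.encard_le_one_iff.mpr fun q q' hq hq' => ?_)
  have hqx := repPairs_insert_insert_of_notMem hB hx hq (hnew q hq)
  have hqx' := repPairs_insert_insert_of_notMem hB hx hq' (hnew q' hq')
  have hqm := hq.2.2.2
  have hqm' := hq'.2.2.2
  rcases le_total m n with h | h
  · have := hqx.1 h
    have := hqx'.1 h
    exact Prod.ext (by omega) (by omega)
  · have := hqx.2.1 h
    have := hqx'.2.1 h
    exact Prod.ext (by omega) (by omega)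

end Extension

theorem exists_repFn_lt {f : ℤ → ℕ∞} (hf : {m | f m = 0}.Finite) (A : Finset ℤ) :
    ∃ m, repFn A m < f m := by
  set B := A.sup Int.natAbs
  obtain ⟨m, hm⟩ := (hf.union (Set.finite_Icc (-(2 * B : ℤ)) (2 * B))).infinite_compl.nonempty
  simp only [Set.mem_compl_iff, Set.mem_union, Set.mem_ofPred_eq, Set.mem_Icc, not_or] at hm
  refine ⟨m, ?_⟩
  rw [repFn_eq_zero_of_lt_natAbs (B := B) (fun a ha => Finset.le_sup (f := Int.natAbs) ha)
    (by omega)]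
  exact pos_iff_ne_zero.mpr hm.1

section Construction

variable (f : ℤ → ℕ∞) (e : ℕ → ℤ) (s : ℕ → ℕ) (G : Set ℕ)

-- Falling back on an arbitrary deficient integer makes every stage add a pair, so that stage `k`
-- really uses the choice `k ∈ G`.
noncomputable def target (A : Finset ℤ) (k : ℕ) : ℤ :=
  if repFn A (e k) < f (e k) then e k else Classical.epsilon fun m => repFn A m < f m

noncomputable def pivot (A : Finset ℤ) (n : ℤ) (k : ℕ) : ℤ :=
  -(3 * ((A.sup Int.natAbs : ℕ) : ℤ) + n.natAbs + s k + 2 + G.indicator 1 k)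

noncomputable def stage : ℕ → Finset ℤ
  | 0 => ∅
  | k + 1 =>
    let n := target f e (stage k) k
    let x := pivot s G (stage k) n k
    insert x (insert (n - x) (stage k))

def limitSet : Set ℤ := ⋃ k, (stage f e s G k : Set ℤ)

variable {f e s G}

theorem repFn_target_lt (hf : {m | f m = 0}.Finite) (A : Finset ℤ) (k : ℕ) :
    repFn A (target f e A k) < f (target f e A k) := by
  unfold target
  split_ifs with h
  · exact h
  · exact Classical.epsilon_spec (exists_repFn_lt hf A)

variable (s G) in
theorem pivot_bounds (A : Finset ℤ) (n : ℤ) (k : ℕ) :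
    3 * ((A.sup Int.natAbs : ℕ) : ℤ) + n.natAbs + s k + 2 ≤ -pivot s G A n k ∧
      -pivot s G A n k ≤ 3 * ((A.sup Int.natAbs : ℕ) : ℤ) + n.natAbs + s k + 3 := by
  by_cases hk : k ∈ G <;> simp [pivot, hk]

theorem pivot_eq_pivot_iff {G' : Set ℕ} {A : Finset ℤ} {n : ℤ} {k : ℕ} :
    pivot s G A n k = pivot s G' A n k ↔ (k ∈ G ↔ k ∈ G') := by
  by_cases h : k ∈ G <;> by_cases h' : k ∈ G' <;> simp [pivot, h, h']

theorem stage_succ (k : ℕ) :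
    stage f e s G (k + 1) =
      insert (pivot s G (stage f e s G k) (target f e (stage f e s G k) k) k)
        (insert (target f e (stage f e s G k) k -
          pivot s G (stage f e s G k) (target f e (stage f e s G k) k) k) (stage f e s G k)) :=
  rfl

theorem coe_stage_succ (k : ℕ) :
    (stage f e s G (k + 1) : Set ℤ) =
      insert (pivot s G (stage f e s G k) (target f e (stage f e s G k) k) k)
        (insert (target f e (stage f e s G k) k -
          pivot s G (stage f e s G k) (target f e (stage f e s G k) k) k)
          (stage f e s G k : Set ℤ)) := by
  rw [stage_succ, Finset.coe_insert, Finset.coe_insert]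

theorem stage_mono : Monotone (stage f e s G) :=
  monotone_nat_of_le_succ fun k => by
    rw [stage_succ]
    exact (Finset.subset_insert _ _).trans (Finset.subset_insert _ _)

theorem coe_stage_mono : Monotone fun k => (stage f e s G k : Set ℤ) :=
  fun _ _ h => Finset.coe_subset.mpr (stage_mono h)

theorem natAbs_le_sup_stage {k : ℕ} : ∀ a ∈ (stage f e s G k : Set ℤ),
    a.natAbs ≤ (stage f e s G k).sup Int.natAbs :=
  fun _ ha => Finset.le_sup (Finset.mem_coe.mp ha)

variable (s G) in
theorem lt_neg_pivot (A : Finset ℤ) (n : ℤ) (k : ℕ) :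
    3 * ((A.sup Int.natAbs : ℕ) : ℤ) + n.natAbs + s k < -pivot s G A n k := by
  have := (pivot_bounds s G A n k).1
  omega

theorem repFn_stage_le (hf : {m | f m = 0}.Finite) (hZ : ∀ m, f m = 0 → m.natAbs ≤ s 0)
    (hs : Monotone s) (k : ℕ) (m : ℤ) : repFn (stage f e s G k) m ≤ f m := by
  induction k with
  | zero => simp [stage, repFn]
  | succ k ih =>
    rw [coe_stage_succ]
    have hx := lt_neg_pivot s G (stage f e s G k) (target f e (stage f e s G k) k) k
    rcases eq_or_ne m (target f e (stage f e s G k) k) with rfl | hm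
    · rw [repFn_insert_insert_self natAbs_le_sup_stage hx]
      exact Order.add_one_le_of_lt (repFn_target_lt hf _ k)
    rcases eq_or_ne (f m) 0 with h0 | h0
    · rwa [repFn_insert_insert_of_ne_of_natAbs_le natAbs_le_sup_stage hx hm
        ((hZ m h0).trans (hs k.zero_le))]
    · exact (repFn_insert_insert_le_of_ne natAbs_le_sup_stage hx hm).trans
        (max_le ih (Order.one_le_iff_ne_zero.mpr h0))

theorem min_le_repFn_stage_succ (k : ℕ) :
    min (f (e k)) (repFn (stage f e s G k) (e k) + 1) ≤ repFn (stage f e s G (k + 1)) (e k) := by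
  by_cases h : repFn (stage f e s G k) (e k) < f (e k)
  · have ht : target f e (stage f e s G k) k = e k := if_pos h
    have hx := lt_neg_pivot s G (stage f e s G k) (e k) k
    rw [coe_stage_succ, ht, repFn_insert_insert_self natAbs_le_sup_stage hx]
    exact min_le_right _ _
  · exact (min_le_left _ _).trans ((not_lt.mp h).trans
      (repFn_mono (coe_stage_mono k.le_succ) _))

theorem exists_le_repFn_stage (he : ∀ m, ∃ᶠ k in Filter.atTop, e k = m) (m : ℤ) :
    ∀ a : ℕ, (a : ℕ∞) ≤ f m → ∃ k, (a : ℕ∞) ≤ repFn (stage f e s G k) m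
  | 0, _ => ⟨0, by simp⟩
  | a + 1, ha => by
    obtain ⟨K, hK⟩ := exists_le_repFn_stage he m a (le_trans (by simp) ha)
    obtain ⟨k, hk, rfl⟩ := Filter.frequently_atTop.mp (he m) K
    refine ⟨k + 1, le_trans (le_min ha ?_) (min_le_repFn_stage_succ k)⟩
    push_cast
    gcongr
    exact hK.trans (repFn_mono (coe_stage_mono hk) _)

theorem repFn_limitSet (hf : {m | f m = 0}.Finite) (hZ : ∀ m, f m = 0 → m.natAbs ≤ s 0)
    (hs : Monotone s) (he : ∀ m, ∃ᶠ k in Filter.atTop, e k = m) (m : ℤ) :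
    repFn (limitSet f e s G) m = f m := by
  rw [limitSet, repFn_iUnion_of_directed coe_stage_mono.directed_le]
  refine le_antisymm (iSup_le fun k => repFn_stage_le hf hZ hs k m)
    (ENat.forall_natCast_le_iff_le.mp fun a ha => ?_)
  obtain ⟨k, hk⟩ := exists_le_repFn_stage he m a ha
  exact hk.trans (le_iSup (fun k => repFn (stage f e s G k : Set ℤ) m) k)

theorem sup_natAbs_add_le_natAbs_of_mem_stage (hs : Monotone s) {a : ℤ} {j k : ℕ}
    (ha : a ∈ stage f e s G k) (ha' : a ∉ stage f e s G j) :
    (stage f e s G j).sup Int.natAbs + s j + 2 ≤ a.natAbs := by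
  induction k with
  | zero => simp [stage] at ha
  | succ k ih =>
    by_cases hak : a ∈ stage f e s G k
    · exact ih hak
    have hjk : j ≤ k := by
      by_contra h
      exact ha' (stage_mono (by omega) ha)
    have : (stage f e s G j).sup Int.natAbs ≤ (stage f e s G k).sup Int.natAbs :=
      Finset.sup_mono (stage_mono hjk)
    have := hs hjk
    have := pivot_bounds s G (stage f e s G k) (target f e (stage f e s G k) k) k
    rw [stage_succ] at ha
    simp only [Finset.mem_insert, hak, or_false] at ha
    rcases ha with rfl | rfl <;> omega

theorem card_stage_le (k : ℕ) : (stage f e s G k).card ≤ 2 * k := by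
  induction k with
  | zero => simp [stage]
  | succ k ih =>
    rw [stage_succ]
    refine (Finset.card_insert_le _ _).trans ?_
    have := Finset.card_insert_le (target f e (stage f e s G k) k -
      pivot s G (stage f e s G k) (target f e (stage f e s G k) k) k) (stage f e s G k)
    omega

theorem countFn_limitSet_le_of_lt (hs : Monotone s) {x k : ℕ} (hx : x < s k) :
    countFn (limitSet f e s G) (-x) x ≤ 2 * k := by
  refine (Set.ncard_le_ncard (t := (stage f e s G k : Set ℤ)) ?_ (Finset.finite_toSet _)).trans ?_
  · rintro a ⟨ha, hxa, hax⟩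
    obtain ⟨j, hj⟩ := Set.mem_iUnion.mp ha
    by_contra hak
    have := sup_natAbs_add_le_natAbs_of_mem_stage hs hj hak
    have : -(x : ℤ) ≤ a := by exact_mod_cast hxa
    have : a ≤ (x : ℤ) := by exact_mod_cast hax
    omega
  · rw [Set.ncard_coe_finset]
    exact card_stage_le k

theorem countFn_limitSet_le {φ : ℕ → ℝ} (hφ0 : ∀ x, 0 ≤ φ x) (hs : StrictMono s)
    (hsφ : ∀ j y, s j ≤ y → (2 * j + 2 : ℝ) ≤ φ y) (x : ℕ) :
    (countFn (limitSet f e s G) (-x) x : ℝ) ≤ φ x := by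
  classical
  have hex : ∃ k, x < s k := ⟨x + 1, Nat.lt_of_lt_of_le x.lt_succ_self (hs.id_le _)⟩
  obtain ⟨k, hxk, hmin⟩ : ∃ k, x < s k ∧ ∀ j < k, s j ≤ x :=
    ⟨Nat.find hex, Nat.find_spec hex, fun j hj => not_lt.mp (Nat.find_min hex hj)⟩
  have hcount : (countFn (limitSet f e s G) (-x) x : ℝ) ≤ 2 * k := by
    exact_mod_cast countFn_limitSet_le_of_lt hs.monotone hxk
  cases k with
  | zero => exact hcount.trans (by simpa using hφ0 x)
  | succ j =>
    calc (countFn (limitSet f e s G) (-x) x : ℝ) ≤ 2 * (j + 1 : ℕ) := hcount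
      _ = 2 * j + 2 := by push_cast; ring
      _ ≤ φ x := hsφ j x (hmin j j.lt_succ_self)

theorem stage_congr {G' : Set ℕ} {k : ℕ} (h : ∀ i < k, (i ∈ G ↔ i ∈ G')) :
    stage f e s G k = stage f e s G' k := by
  induction k with
  | zero => rfl
  | succ k ih =>
    have hpivot : ∀ A n, pivot s G A n k = pivot s G' A n k :=
      fun A n => pivot_eq_pivot_iff.mpr (h k k.lt_succ_self)
    rw [stage_succ, stage_succ, ih fun i hi => h i (by omega), hpivot]

theorem limitSet_injective (hs : Monotone s) : Function.Injective (limitSet f e s) := by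
  intro G G' hGG'
  by_contra hne
  obtain ⟨k, hk, hmin⟩ : ∃ k, ¬(k ∈ G ↔ k ∈ G') ∧ ∀ i < k, (i ∈ G ↔ i ∈ G') := by
    classical
    have hex : ∃ k, ¬(k ∈ G ↔ k ∈ G') := not_forall.mp (mt Set.ext hne)
    exact ⟨Nat.find hex, Nat.find_spec hex, fun i hi => not_not.mp (Nat.find_min hex hi)⟩
  obtain ⟨A, hA, hA'⟩ : ∃ A, stage f e s G k = A ∧ stage f e s G' k = A :=
    ⟨_, rfl, (stage_congr hmin).symm⟩
  obtain ⟨n, hn⟩ : ∃ n, target f e A k = n := ⟨_, rfl⟩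
  have hxx' : pivot s G A n k ≠ pivot s G' A n k := mt pivot_eq_pivot_iff.mp hk
  have hx := pivot_bounds s G A n k
  have hx' := pivot_bounds s G' A n k
  have hxG : pivot s G A n k ∈ limitSet f e s G' := by
    rw [← hGG']
    exact Set.mem_iUnion.mpr ⟨k + 1, by simp [stage_succ, hA, hn]⟩
  obtain ⟨j, hj⟩ := Set.mem_iUnion.mp hxG
  have hx'mem : pivot s G' A n k ∈ stage f e s G' (k + 1) := by
    rw [stage_succ, hA', hn]
    exact Finset.mem_insert_self _ _
  have hxnot : pivot s G A n k ∉ stage f e s G' (k + 1) := by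
    rw [stage_succ, hA', hn]
    simp only [Finset.mem_insert, not_or]
    refine ⟨hxx', by omega, fun hxA => ?_⟩
    have := Finset.le_sup (f := Int.natAbs) hxA
    omega
  have := sup_natAbs_add_le_natAbs_of_mem_stage hs hj hxnot
  have := Finset.le_sup (f := Int.natAbs) hx'mem
  omega

end Construction

theorem exists_seq_frequently_eq (α : Type*) [Countable α] [Nonempty α] :
    ∃ e : ℕ → α, ∀ a, ∃ᶠ k in Filter.atTop, e k = a := by
  obtain ⟨u, hu⟩ := exists_surjective_nat α
  refine ⟨fun k => u k.unpair.2, fun a => Filter.frequently_atTop.mpr fun K => ?_⟩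
  obtain ⟨i, rfl⟩ := hu a
  exact ⟨Nat.pair K i, Nat.left_le_pair K i, by simp⟩

theorem Filter.Tendsto.exists_strictMono_forall_le {φ : ℕ → ℝ}
    (hφ : Filter.Tendsto φ Filter.atTop Filter.atTop) (b : ℕ → ℝ) (Z : ℕ) :
    ∃ s : ℕ → ℕ, StrictMono s ∧ Z ≤ s 0 ∧ ∀ j y, s j ≤ y → b j ≤ φ y := by
  obtain ⟨s, hs, hsφ⟩ := Filter.extraction_forall_of_eventually'
    (P := fun j k => Z ≤ k ∧ ∀ y ≥ k, b j ≤ φ y) fun j => by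
      obtain ⟨N, hN⟩ := Filter.eventually_atTop.mp (hφ.eventually_ge_atTop (b j))
      exact ⟨max N Z, fun k hk => ⟨le_of_max_le_right hk, fun y hy => hN y (by omega)⟩⟩
  exact ⟨s, hs, (hsφ 0).1, fun j y hy => (hsφ j).2 y hy⟩

theorem stmt_5 (f : ℤ → ℕ∞) (hf : {n : ℤ | f n = 0}.Finite)
    (φ : ℕ → ℝ) (hφ0 : ∀ x, 0 ≤ φ x)
    (hφ : Filter.Tendsto φ Filter.atTop Filter.atTop) :
    ¬ {A : Set ℤ |
        {n : ℤ | ¬ 1 ≤ repFn A n}.Finite ∧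
        (∀ n : ℤ, repFn A n = f n) ∧
        (∀ x : ℕ, (countFn A (-(x : ℝ)) (x : ℝ) : ℝ) ≤ φ x)}.Countable := by
  obtain ⟨e, he⟩ := exists_seq_frequently_eq ℤ
  obtain ⟨s, hs, hZ, hsφ⟩ := hφ.exists_strictMono_forall_le (fun j => 2 * j + 2)
    (hf.toFinset.sup Int.natAbs)
  intro hcount
  suffices Countable (Set ℕ) by
    obtain ⟨u, hu⟩ := Countable.exists_injective_nat (Set ℕ)
    exact Function.cantor_injective u hu
  refine Set.countable_univ_iff.mp (Set.MapsTo.countable_of_injOn (fun G _ => ?_)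
    (limitSet_injective (f := f) (e := e) hs.monotone).injOn hcount)
  have hrep := repFn_limitSet (G := G) hf
    (fun m hm => (Finset.le_sup (hf.mem_toFinset.mpr hm)).trans hZ) hs.monotone he
  refine ⟨hf.subset fun n hn => ?_, hrep, countFn_limitSet_le hφ0 hs hsφ⟩
  simpa [hrep, Order.one_le_iff_ne_zero] using hn
end

section
/- Let A be a finite set of integers with 0 ∉ A, let T be a positive integer with |a| ≤ T for all a ∈ A, let n be a positive integer, and let D be a Sidon set contained in [1, n]. Set B = A ∪ {5Td : d ∈ D}. Then r_B(m) = r_A(m) for every m ∈ 2A, and r_B(m) = 1 for every m ∈ 2B with m ∉ 2A. -/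
open Pointwise

/-- A set `D` of integers is a Sidon set if whenever `d₁ + d₂ = d₃ + d₄` with all
`dᵢ ∈ D`, `d₁ ≤ d₂` and `d₃ ≤ d₄`, then `d₁ = d₃` and `d₂ = d₄`. -/
def IsSidon (D : Set ℤ) : Prop :=
  ∀ d₁ ∈ D, ∀ d₂ ∈ D, ∀ d₃ ∈ D, ∀ d₄ ∈ D,
    d₁ ≤ d₂ → d₃ ≤ d₄ → d₁ + d₂ = d₃ + d₄ → d₁ = d₃ ∧ d₂ = d₄

theorem stmt_11 (A : Set ℤ) (hA : A.Finite) (hA0 : (0 : ℤ) ∉ A)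
    (T : ℤ) (hT : 0 < T) (hAT : ∀ a ∈ A, |a| ≤ T)
    (n : ℤ) (hn : 0 < n)
    (D : Set ℤ) (hD : D ⊆ Set.Icc 1 n) (hDS : IsSidon D)
    (B : Set ℤ) (hB : B = A ∪ (fun d => 5 * T * d) '' D) :
    (∀ m ∈ A + A, repFn B m = repFn A m) ∧
    (∀ m ∈ B + B, m ∉ A + A → repFn B m = 1) := by
  subst hB
  set C : Set ℤ := (fun d => 5 * T * d) '' D with hC
  have hAbd : ∀ a ∈ A, -T ≤ a ∧ a ≤ T ∧ a ≠ 0 := by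
    intro a ha
    have h := abs_le.mp (hAT a ha)
    exact ⟨h.1, h.2, fun h0 => hA0 (h0 ▸ ha)⟩
  have hDbd : ∀ d ∈ D, 1 ≤ d := fun d hd => (hD hd).1
  have hCbd : ∀ c ∈ C, 5 * T ≤ c := by
    rintro c ⟨d, hd, rfl⟩
    have h1 := hDbd d hd
    show (5 : ℤ) * T ≤ 5 * T * d
    nlinarith
  have hmemB : ∀ b ∈ A ∪ C, b ∈ A ∨ ∃ d ∈ D, b = 5 * T * d := by
    rintro b (hb | ⟨d, hd, rfl⟩)
    · exact Or.inl hb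
    · exact Or.inr ⟨d, hd, rfl⟩
  have lowB : ∀ b ∈ A ∪ C, -T ≤ b := by
    rintro b (hb | hb)
    · exact (hAbd b hb).1
    · have := hCbd b hb; linarith
  constructor
  · intro m hm
    obtain ⟨a1, ha1, a2, ha2, hsum⟩ := Set.mem_add.mp hm
    have hb1 := hAbd a1 ha1
    have hb2 := hAbd a2 ha2
    have hmle : m ≤ 2 * T := by linarith
    unfold repFn
    congr 1
    ext ⟨x, y⟩
    simp only [Set.mem_setOf_eq]
    constructor
    · rintro ⟨hx, hy, hxy, hs⟩
      have hxA : x ∈ A := by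
        rcases hx with hx | hx
        · exact hx
        · have := hCbd x hx
          have := lowB y hy
          linarith
      have hyA : y ∈ A := by
        rcases hy with hy | hy
        · exact hy
        · have := hCbd y hy
          have := lowB x hx
          linarith
      exact ⟨hxA, hyA, hxy, hs⟩
    · rintro ⟨hx, hy, hxy, hs⟩
      exact ⟨Or.inl hx, Or.inl hy, hxy, hs⟩
  · intro m hm hmA
    obtain ⟨x0, hx0, y0, hy0, hsum0⟩ := Set.mem_add.mp hm
    -- not both in A
    have hnb : ¬ (x0 ∈ A ∧ y0 ∈ A) := by
      rintro ⟨h1, h2⟩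
      exact hmA (Set.mem_add.mpr ⟨x0, h1, y0, h2, hsum0⟩)
    have hm2T : 2 * T < m := by
      rcases hmemB x0 hx0 with h1 | ⟨d, hd, rfl⟩
      · rcases hmemB y0 hy0 with h2 | ⟨d, hd, hy⟩
        · exact absurd ⟨h1, h2⟩ hnb
        · have hc : y0 ∈ C := ⟨d, hd, hy.symm⟩
          have := hCbd y0 hc
          have := (hAbd x0 h1).1
          linarith
      · have hc : (5 * T * d : ℤ) ∈ C := ⟨d, hd, rfl⟩
        have := hCbd _ hc
        have := lowB y0 hy0
        linarith
    -- any pair (x,y) with x ≤ y, x+y=m has y in C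
    have hyC : ∀ x y : ℤ, x ∈ A ∪ C → y ∈ A ∪ C → x ≤ y → x + y = m →
        ∃ d ∈ D, y = 5 * T * d := by
      intro x y hx hy hxy hs
      rcases hmemB y hy with h2 | h2
      · exfalso
        have hy2 := (hAbd y h2).2.1
        have hx2 : x ∈ A := by
          rcases hx with hx | hx
          · exact hx
          · have := hCbd x hx; linarith
        have := (hAbd x hx2).2.1
        linarith
      · exact h2
    -- uniqueness
    have key : ∀ x y x' y' : ℤ, x ∈ A ∪ C → y ∈ A ∪ C → x' ∈ A ∪ C → y' ∈ A ∪ C →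
        x ≤ y → x' ≤ y' → x + y = m → x' + y' = m → x = x' ∧ y = y' := by
      intro x y x' y' hx hy hx' hy' hxy hxy' hs hs'
      obtain ⟨d2, hd2, rfl⟩ := hyC x y hx hy hxy hs
      obtain ⟨d4, hd4, rfl⟩ := hyC x' y' hx' hy' hxy' hs'
      rcases hmemB x hx with h1 | ⟨d1, hd1, rfl⟩
      · rcases hmemB x' hx' with h3 | ⟨d3, hd3, rfl⟩
        · -- both in A
          have hxb := hAbd x h1
          have hxb' := hAbd x' h3
          have heq : x - x' = 5 * T * (d4 - d2) := by ring_nf; nlinarith [hs, hs']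
          have hdeq : d2 = d4 := by
            rcases lt_trichotomy d2 d4 with h | h | h
            · exfalso; have : 1 ≤ d4 - d2 := by omega
              nlinarith
            · exact h
            · exfalso; have : 1 ≤ d2 - d4 := by omega
              nlinarith
          subst hdeq
          constructor
          · linarith
          · rfl
        · -- x ∈ A, x' = 5Td3 : contradiction
          exfalso
          have hxb := hAbd x h1
          have heq : x = 5 * T * (d3 + d4 - d2) := by linarith [hs, hs']
          rcases lt_trichotomy (d3 + d4 - d2) 0 with h | h | h
          · have : d3 + d4 - d2 ≤ -1 := by omega
            nlinarith [hxb.1]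
          · exact hxb.2.2 (by rw [heq, h, mul_zero])
          · have : 1 ≤ d3 + d4 - d2 := by omega
            nlinarith [hxb.2.1]
      · rcases hmemB x' hx' with h3 | ⟨d3, hd3, rfl⟩
        · -- x = 5Td1, x' ∈ A : contradiction
          exfalso
          have hxb := hAbd x' h3
          have heq : x' = 5 * T * (d1 + d2 - d4) := by linarith [hs, hs']
          rcases lt_trichotomy (d1 + d2 - d4) 0 with h | h | h
          · have : d1 + d2 - d4 ≤ -1 := by omega
            nlinarith [hxb.1]
          · exact hxb.2.2 (by rw [heq, h, mul_zero])
          · have : 1 ≤ d1 + d2 - d4 := by omega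
            nlinarith [hxb.2.1]
        · -- both in C : Sidon
          have h5T : (5 * T : ℤ) ≠ 0 := by positivity
          have hsum : d1 + d2 = d3 + d4 := by
            have : 5 * T * (d1 + d2) = 5 * T * (d3 + d4) := by ring_nf; nlinarith [hs, hs']
            exact mul_left_cancel₀ h5T this
          have hd12 : d1 ≤ d2 := by
            by_contra h
            push_neg at h
            have : 5 * T * d2 < 5 * T * d1 := by
              apply mul_lt_mul_of_pos_left h (by linarith)
            linarith
          have hd34 : d3 ≤ d4 := by
            by_contra h
            push_neg at h
            have : 5 * T * d4 < 5 * T * d3 := by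
              apply mul_lt_mul_of_pos_left h (by linarith)
            linarith
          obtain ⟨he1, he2⟩ := hDS d1 hd1 d2 hd2 d3 hd3 d4 hd4 hd12 hd34 hsum
          exact ⟨by rw [he1], by rw [he2]⟩
    -- produce canonical representative
    rcases le_total x0 y0 with hle | hle
    · unfold repFn
      rw [Set.encard_eq_one]
      refine ⟨(x0, y0), ?_⟩
      apply Set.eq_singleton_iff_unique_mem.mpr
      refine ⟨⟨hx0, hy0, hle, hsum0⟩, ?_⟩
      rintro ⟨u, v⟩ ⟨hu, hv, huv, hs⟩
      obtain ⟨h1, h2⟩ := key u v x0 y0 hu hv hx0 hy0 huv hle hs hsum0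
      simp [h1, h2]
    · unfold repFn
      rw [Set.encard_eq_one]
      refine ⟨(y0, x0), ?_⟩
      apply Set.eq_singleton_iff_unique_mem.mpr
      refine ⟨⟨hy0, hx0, hle, by linarith⟩, ?_⟩
      rintro ⟨u, v⟩ ⟨hu, hv, huv, hs⟩
      obtain ⟨h1, h2⟩ := key u v y0 x0 hu hv hy0 hx0 huv hle hs (by linarith)
      simp [h1, h2]
end
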